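/- arXiv:2212.08564 — 3 statements merged into one kernel-verified Lean document; each statement's English description precedes it below -/
import Mathlib

section
/- Let a, b ∈ ℝ with a ≠ 0 and let t > 0. Then the improper integral lim_{T→∞} ∫_t^T e^{iaτ} e^{-ib·ln τ} dτ/τ exists in ℂ, and its modulus is at most (2 + |b|)/(|a| t). -/
/-!
Integrate the phase by parts: with `v τ = e^{iaτ}/(ia)`, for any amplitude `g` on `[t, ∞)`,
`∫_t^T e^{iaτ} g = g T v T - g t v t - ∫_t^T g' v`. If `g → 0` and `g'` is integrable on
`(t, ∞)`, both sides converge and, since `|v| = 1/|a|`, the limit has modulus at most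
`(|g t| + ∫_t^∞ |g'|) / |a|`. Here `g τ = e^{-ib ln τ}/τ = τ^{-1-ib}`, so `|g t| = 1/t` and
`|g' τ| = |1 + ib|/τ²`, whose integral over `(t, ∞)` is `|1 + ib|/t ≤ (1 + |b|)/t`.
-/

open Filter
open Complex MeasureTheory Set Topology

theorem hasDerivAt_exp_mul_ofReal_div {c : ℂ} (hc : c ≠ 0) (x : ℝ) :
    HasDerivAt (fun τ : ℝ => exp (c * τ) / c) (exp (c * x)) x := by
  have := ((hasDerivAt_id (x : ℂ)).const_mul c).cexp.comp_ofReal.div_const c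
  simpa [mul_div_cancel_left₀ _ hc, mul_comm] using this

theorem norm_exp_I_mul_ofReal_mul (a x : ℝ) : ‖exp (I * a * x)‖ = 1 := by
  rw [mul_assoc, ← ofReal_mul, norm_exp_I_mul_ofReal]

theorem exists_tendsto_integral_exp_I_mul_mul_of_hasDerivAt {a t : ℝ} (ha : a ≠ 0)
    {g g' : ℝ → ℂ} (hg : ∀ x ∈ Ici t, HasDerivAt g (g' x) x) (hg' : IntegrableOn g' (Ioi t))
    (hg0 : Tendsto g atTop (𝓝 0)) :
    ∃ L : ℂ, Tendsto (fun T : ℝ => ∫ τ in t..T, exp (I * a * τ) * g τ) atTop (𝓝 L) ∧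
      ‖L‖ ≤ (‖g t‖ + ∫ x in Ioi t, ‖g' x‖) / |a| := by
  have hc : I * a ≠ 0 := mul_ne_zero I_ne_zero (ofReal_ne_zero.2 ha)
  set v : ℝ → ℂ := fun τ => exp (I * a * τ) / (I * a)
  have hv : ∀ x : ℝ, HasDerivAt v (exp (I * a * x)) x := hasDerivAt_exp_mul_ofReal_div hc
  have hv_norm : ∀ x, ‖v x‖ = |a|⁻¹ := fun x => by
    simp only [v, norm_div, norm_exp_I_mul_ofReal_mul, norm_mul, norm_I, norm_real,
      Real.norm_eq_abs, one_mul, one_div]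
  have hv_cont : Continuous v := continuous_iff_continuousAt.2 fun x => (hv x).continuousAt
  have hg'v : IntegrableOn (fun x => g' x * v x) (Ioi t) :=
    hg'.mul_bdd hv_cont.aestronglyMeasurable (ae_of_all _ fun x => (hv_norm x).le)
  have hibp : ∀ T ≥ t, ∫ τ in t..T, exp (I * a * τ) * g τ =
      g T * v T - g t * v t - ∫ τ in t..T, g' τ * v τ := by
    intro T hT
    simp_rw [mul_comm (exp _)]
    refine intervalIntegral.integral_mul_deriv_eq_deriv_mul
      (fun x hx => hg x (uIcc_of_le hT ▸ hx).1) (fun x _ => hv x) ?_ ?_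
    · exact (intervalIntegrable_iff_integrableOn_Ioc_of_le hT).2
        (hg'.mono_set Ioc_subset_Ioi_self)
    · exact (by fun_prop : Continuous fun τ : ℝ => exp (I * a * τ)).intervalIntegrable _ _
  have hboundary : Tendsto (fun T => g T * v T) atTop (𝓝 0) := by
    rw [tendsto_zero_iff_norm_tendsto_zero]
    simpa [hv_norm] using (tendsto_zero_iff_norm_tendsto_zero.1 hg0).mul_const |a|⁻¹
  refine ⟨-(g t * v t) - ∫ x in Ioi t, g' x * v x, ?_, ?_⟩
  · have := (hboundary.sub_const (g t * v t)).sub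
      (intervalIntegral_tendsto_integral_Ioi t hg'v tendsto_id)
    rw [zero_sub] at this
    exact this.congr' ((eventually_ge_atTop t).mono fun T hT => (hibp T hT).symm)
  · calc ‖-(g t * v t) - ∫ x in Ioi t, g' x * v x‖
        ≤ ‖g t * v t‖ + ∫ x in Ioi t, ‖g' x * v x‖ :=
          (norm_sub_le _ _).trans (by rw [norm_neg]; gcongr; exact norm_integral_le_integral_norm _)
      _ = (‖g t‖ + ∫ x in Ioi t, ‖g' x‖) / |a| := by
          simp only [norm_mul, hv_norm, integral_mul_const]
          ring

theorem hasDerivAt_exp_neg_I_mul_log_div (b : ℝ) {x : ℝ} (hx : x ≠ 0) :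
    HasDerivAt (fun τ : ℝ => exp (-(I * b * Real.log τ)) / τ)
      (-(1 + I * b) * exp (-(I * b * Real.log x)) / x ^ 2) x := by
  have hphase : HasDerivAt (fun τ : ℝ => exp (-(I * b * Real.log τ)))
      (exp (-(I * b * Real.log x)) * -(I * b * (x : ℂ)⁻¹)) x := by
    simpa using ((Real.hasDerivAt_log hx).ofReal_comp.const_mul (I * b)).neg.cexp
  refine (hphase.div ofRealCLM.hasDerivAt (ofReal_ne_zero.2 hx)).congr_deriv ?_
  have : (x : ℂ) ≠ 0 := ofReal_ne_zero.2 hx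
  simp only [ofRealCLM_apply, ofReal_one]
  field_simp
  ring

theorem norm_exp_neg_I_mul_log (b x : ℝ) : ‖exp (-(I * b * Real.log x))‖ = 1 := by
  rw [mul_assoc, ← ofReal_mul, ← mul_neg, ← ofReal_neg, mul_comm, norm_exp_ofReal_mul_I]

theorem norm_exp_neg_I_mul_log_div (b x : ℝ) : ‖exp (-(I * b * Real.log x)) / x‖ = |x|⁻¹ := by
  rw [norm_div, norm_exp_neg_I_mul_log, norm_real, Real.norm_eq_abs, one_div]

theorem norm_neg_one_add_I_mul_exp_div_sq (b : ℝ) {x : ℝ} (hx : 0 < x) :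
    ‖-(1 + I * b) * exp (-(I * b * Real.log x)) / x ^ 2‖ = ‖1 + I * b‖ * x ^ (-2 : ℝ) := by
  rw [norm_div, norm_mul, norm_neg, norm_exp_neg_I_mul_log, mul_one, norm_pow, norm_real,
    Real.norm_of_nonneg hx.le, Real.rpow_neg hx.le, div_eq_mul_inv]
  norm_cast

theorem integrableOn_Ioi_neg_one_add_I_mul_exp_div_sq (b : ℝ) {t : ℝ} (ht : 0 < t) :
    IntegrableOn (fun x : ℝ => -(1 + I * b) * exp (-(I * b * Real.log x)) / x ^ 2) (Ioi t) := by
  refine (integrable_norm_iff (by fun_prop : Measurable _).aestronglyMeasurable).1 ?_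
  have hmajorant : IntegrableOn (fun x : ℝ => ‖1 + I * b‖ * x ^ (-2 : ℝ)) (Ioi t) :=
    (integrableOn_Ioi_rpow_of_lt (by norm_num) ht).const_mul _
  refine hmajorant.congr_fun (fun x hx => ?_) measurableSet_Ioi
  exact (norm_neg_one_add_I_mul_exp_div_sq b (ht.trans hx)).symm

theorem integral_Ioi_norm_neg_one_add_I_mul_exp_div_sq (b : ℝ) {t : ℝ} (ht : 0 < t) :
    ∫ x in Ioi t, ‖-(1 + I * b) * exp (-(I * b * Real.log x)) / x ^ 2‖ = ‖1 + I * b‖ / t := by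
  rw [setIntegral_congr_fun measurableSet_Ioi
      fun x hx => norm_neg_one_add_I_mul_exp_div_sq b (ht.trans hx),
    integral_const_mul, integral_Ioi_rpow_of_lt (by norm_num) ht]
  norm_num [Real.rpow_neg_one, div_eq_mul_inv]

theorem norm_one_add_I_mul_le (b : ℝ) : ‖1 + I * b‖ ≤ 1 + |b| := by
  simpa using norm_add_le (1 : ℂ) (I * b)

/-- For `a b : ℝ` with `a ≠ 0` and `t > 0`, the improper integral
`lim_{T→∞} ∫_t^T e^{iaτ} e^{-ib ln τ} dτ/τ` exists in `ℂ` and its modulus is at most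
`(2 + |b|) / (|a| t)`. -/
theorem oscillatory_integral_exists_and_bound (a b t : ℝ) (ha : a ≠ 0) (ht : 0 < t) :
    ∃ L : ℂ,
      Tendsto
        (fun T : ℝ => ∫ τ in t..T,
          Complex.exp (Complex.I * a * τ) * Complex.exp (-(Complex.I * b * Real.log τ)) / τ)
        atTop (nhds L)
      ∧ ‖L‖ ≤ (2 + |b|) / (|a| * t) := by
  have hdecay : Tendsto (fun τ : ℝ => exp (-(I * b * Real.log τ)) / τ) atTop (𝓝 0) := by
    refine tendsto_zero_iff_norm_tendsto_zero.2 (tendsto_inv_atTop_zero.congr' ?_)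
    filter_upwards [eventually_gt_atTop 0] with τ hτ
    rw [norm_exp_neg_I_mul_log_div, abs_of_pos hτ]
  obtain ⟨L, hL, hL_le⟩ := exists_tendsto_integral_exp_I_mul_mul_of_hasDerivAt ha
    (fun x hx => hasDerivAt_exp_neg_I_mul_log_div b (ht.trans_le hx).ne')
    (integrableOn_Ioi_neg_one_add_I_mul_exp_div_sq b ht) hdecay
  refine ⟨L, by simpa only [mul_div_assoc] using hL, hL_le.trans ?_⟩
  rw [integral_Ioi_norm_neg_one_add_I_mul_exp_div_sq b ht, norm_exp_neg_I_mul_log_div,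
    abs_of_pos ht]
  calc (t⁻¹ + ‖1 + I * b‖ / t) / |a| = (1 + ‖1 + I * b‖) / (|a| * t) := by
        field_simp
    _ ≤ (2 + |b|) / (|a| * t) := by gcongr ?_ / _; linarith [norm_one_add_I_mul_le b]
end

section
/- For every α ∈ ℂ, the function u_α(t,x) := α e^{i|α|² ln t} e^{i x²/(4t)}/√t satisfies the focusing cubic Schrödinger equation i ∂_t u + ∂_x² u + |u|² u = 0 pointwise on (0,∞) × ℝ. -/
/-!
Write `u = α e^{iφ} / √t` with `φ = |α|² ln t + x²/(4t)`. Each derivative of `u` is `u` times a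
multiplier: `∂_t u = u (i|α|²/t − i x²/(4t²) − 1/(2t))`, and, since in `x` the profile is a Gaussian
chirp `A e^{c x²}` with `c = i/(4t)`, `∂_x² u = u ((2cx)² + 2c)`. As the phases have modulus one,
`|u|² = |α|²/t`. With `i² = −1` the three multipliers sum to zero.
-/

noncomputable section

/-- The self-similar profile `u_α(t,x) = α e^{i|α|² ln t} e^{i x²/(4t)} / √t`. -/
def uAlpha (α : ℂ) (t x : ℝ) : ℂ :=
  α * Complex.exp (Complex.I * ((‖α‖ ^ 2 : ℝ) : ℂ) * (Real.log t : ℂ)) *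
    Complex.exp (Complex.I * (x : ℂ) ^ 2 / (4 * (t : ℂ))) / (Real.sqrt t : ℂ)

open Complex

lemma hasDerivAt_cexp_mul_sq (c : ℂ) (y : ℝ) :
    HasDerivAt (fun y : ℝ => exp (c * (y : ℂ) ^ 2)) (exp (c * (y : ℂ) ^ 2) * (2 * c * y)) y := by
  have hsq : HasDerivAt (fun y : ℝ => (y : ℂ) ^ 2) (2 * (y : ℂ)) y := by
    simpa using (hasDerivAt_pow 2 (y : ℂ)).comp_ofReal
  convert (hsq.const_mul c).cexp using 1
  ring

lemma deriv_const_mul_cexp_mul_sq (A c : ℂ) :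
    deriv (fun y : ℝ => A * exp (c * (y : ℂ) ^ 2))
      = fun y : ℝ => A * exp (c * (y : ℂ) ^ 2) * (2 * c * y) := by
  funext y
  rw [((hasDerivAt_cexp_mul_sq c y).const_mul A).deriv]
  ring

lemma iteratedDeriv_two_const_mul_cexp_mul_sq (A c : ℂ) (y : ℝ) :
    iteratedDeriv 2 (fun y : ℝ => A * exp (c * (y : ℂ) ^ 2)) y
      = A * exp (c * (y : ℂ) ^ 2) * ((2 * c * y) ^ 2 + 2 * c) := by
  have hlin : HasDerivAt (fun y : ℝ => 2 * c * (y : ℂ)) (2 * c) y := by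
    simpa using (hasDerivAt_id (y : ℂ)).comp_ofReal.const_mul (2 * c)
  rw [iteratedDeriv_succ, iteratedDeriv_one, deriv_const_mul_cexp_mul_sq,
    (((hasDerivAt_cexp_mul_sq c y).const_mul A).fun_mul hlin).deriv]
  ring

lemma uAlpha_eq_const_mul_cexp_mul_sq (α : ℂ) (t : ℝ) :
    (fun y => uAlpha α t y) = fun y : ℝ =>
      α * exp (I * ((‖α‖ ^ 2 : ℝ) : ℂ) * (Real.log t : ℂ)) / (Real.sqrt t : ℂ) *
        exp (I / (4 * t) * (y : ℂ) ^ 2) := by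
  funext y
  simp only [uAlpha]
  ring_nf

lemma norm_uAlpha (α : ℂ) (t x : ℝ) : ‖uAlpha α t x‖ = ‖α‖ / Real.sqrt t := by
  have hphases : uAlpha α t x = α * exp (I * ((‖α‖ ^ 2 * Real.log t : ℝ) : ℂ))
      * exp (I * ((x ^ 2 / (4 * t) : ℝ) : ℂ)) / (Real.sqrt t : ℂ) := by
    simp only [uAlpha]
    push_cast
    ring_nf
  rw [hphases, norm_div, norm_mul, norm_mul, norm_exp_I_mul_ofReal, norm_exp_I_mul_ofReal,
    norm_real, Real.norm_of_nonneg (Real.sqrt_nonneg t), mul_one, mul_one]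

lemma hasDerivAt_uAlpha_time (α : ℂ) (x : ℝ) {t : ℝ} (ht : 0 < t) :
    HasDerivAt (fun s => uAlpha α s x)
      (uAlpha α t x * (I * ((‖α‖ ^ 2 : ℝ) : ℂ) / t - I * (x : ℂ) ^ 2 / (4 * (t : ℂ) ^ 2)
        - 1 / (2 * t))) t := by
  have ht' : (t : ℂ) ≠ 0 := by exact_mod_cast ht.ne'
  have hsqrt : (Real.sqrt t : ℂ) ≠ 0 := by exact_mod_cast (Real.sqrt_pos.mpr ht).ne'
  have hphase : HasDerivAt (fun s : ℝ => exp (I * ((‖α‖ ^ 2 : ℝ) : ℂ) * (Real.log s : ℂ)))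
      (exp (I * ((‖α‖ ^ 2 : ℝ) : ℂ) * (Real.log t : ℂ)) * (I * ((‖α‖ ^ 2 : ℝ) : ℂ) * (t⁻¹ : ℝ))) t :=
    (((Real.hasDerivAt_log ht.ne').ofReal_comp).const_mul _).cexp
  have hchirp : HasDerivAt (fun s : ℝ => exp (I * (x : ℂ) ^ 2 / 4 * (s : ℂ)⁻¹))
      (exp (I * (x : ℂ) ^ 2 / 4 * (t : ℂ)⁻¹) * (I * (x : ℂ) ^ 2 / 4 * -((t : ℂ) ^ 2)⁻¹)) t :=
    (((hasDerivAt_inv ht').comp_ofReal).const_mul _).cexp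
  have hroot : HasDerivAt (fun s : ℝ => (Real.sqrt s : ℂ)) ((1 / (2 * Real.sqrt t) : ℝ)) t :=
    (Real.hasDerivAt_sqrt ht.ne').ofReal_comp
  have hform : (fun s => uAlpha α s x) = fun s : ℝ =>
      α * exp (I * ((‖α‖ ^ 2 : ℝ) : ℂ) * (Real.log s : ℂ)) *
        exp (I * (x : ℂ) ^ 2 / 4 * (s : ℂ)⁻¹) / (Real.sqrt s : ℂ) := by
    funext s
    simp only [uAlpha]
    ring_nf
  rw [hform]
  refine (((hphase.const_mul α).fun_mul hchirp).fun_div hroot hsqrt).congr_deriv ?_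
  have hsq : (Real.sqrt t : ℂ) ^ 2 = t := by exact_mod_cast Real.sq_sqrt ht.le
  rw [congrFun hform t]
  push_cast
  rw [← hsq]
  field_simp
  ring

lemma iteratedDeriv_two_uAlpha_space (α : ℂ) (t x : ℝ) :
    iteratedDeriv 2 (fun y => uAlpha α t y) x
      = uAlpha α t x * ((2 * (I / (4 * t)) * x) ^ 2 + 2 * (I / (4 * t))) := by
  rw [uAlpha_eq_const_mul_cexp_mul_sq, iteratedDeriv_two_const_mul_cexp_mul_sq,
    ← congrFun (uAlpha_eq_const_mul_cexp_mul_sq α t) x]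

/-- `u_α` satisfies the focusing cubic NLS
`i ∂_t u + ∂_x² u + |u|² u = 0` pointwise on `(0,∞) × ℝ`. -/
theorem uAlpha_solves_NLS (α : ℂ) (t : ℝ) (ht : 0 < t) (x : ℝ) :
    Complex.I * deriv (fun s => uAlpha α s x) t
      + iteratedDeriv 2 (fun y => uAlpha α t y) x
      + ((‖uAlpha α t x‖ ^ 2 : ℝ) : ℂ) * uAlpha α t x = 0 := by
  have hmod : ((‖uAlpha α t x‖ ^ 2 : ℝ) : ℂ) = ((‖α‖ ^ 2 : ℝ) : ℂ) / t := by
    rw [norm_uAlpha, div_pow, Real.sq_sqrt ht.le]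
    push_cast
    ring
  rw [(hasDerivAt_uAlpha_time α x ht).deriv, iteratedDeriv_two_uAlpha_space, hmod]
  linear_combination ((‖α‖ ^ 2 : ℝ) : ℂ) / t * uAlpha α t x * I_sq
end
end

section
/- Let α ∈ ℂ with α ≠ 0 and set u_α(t,x) := α e^{i|α|² ln t} e^{i x²/(4t)}/√t. Then there is no tempered distribution u₀ ∈ 𝒮'(ℝ) such that ∫_ℝ u_α(t,x) φ(x) dx → u₀(φ) as t → 0⁺ for every Schwartz function φ ∈ 𝒮(ℝ). In other words, u_α(t,·) has no limit in 𝒮'(ℝ) as t → 0⁺. -/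
/-!
Test against the Gaussian `φ(x) = e^{-x²/2}`. The complex Gaussian integral gives, for
`t > 0`, `(∫ u_α(t,x) φ(x) dx)² = α² e^{2i|α|² ln t} · 4π / (2t - i)`; squaring removes the
branch of the square root. If the pairing converged as `t → 0⁺`, then so would
`e^{2i|α|² ln t}`, hence `e^{is}` as `s → -∞`. But a limit `z` of `e^{is}` would satisfy
`z = -z` (shift `s` by `π`) and `‖z‖ = 1`.
-/

noncomputable section

open Complex Filter Topology Polynomial
open scoped Real ContDiff

lemma pow_abs_mul_exp_neg_sq_half_le (j : ℕ) (x : ℝ) :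
    |x| ^ j * rexp (-(x ^ 2 / 2)) ≤ j.factorial * rexp (1 / 2) := by
  have hpow : |x| ^ j ≤ j.factorial * rexp |x| := by
    rw [← div_le_iff₀' (by positivity)]
    exact Real.pow_div_factorial_le_exp _ (abs_nonneg x) j
  have hexp : |x| - x ^ 2 / 2 ≤ 1 / 2 := by nlinarith [sq_abs x, sq_nonneg (|x| - 1)]
  calc |x| ^ j * rexp (-(x ^ 2 / 2)) ≤ j.factorial * rexp |x| * rexp (-(x ^ 2 / 2)) := by gcongr
    _ = j.factorial * rexp (|x| - x ^ 2 / 2) := by rw [mul_assoc, ← Real.exp_add, sub_eq_add_neg]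
    _ ≤ j.factorial * rexp (1 / 2) := by gcongr

lemma exists_bound_pow_abs_mul_abs_eval_mul_exp_neg_sq_half (k : ℕ) (p : ℝ[X]) :
    ∃ C, ∀ x : ℝ, |x| ^ k * |p.eval x| * rexp (-(x ^ 2 / 2)) ≤ C := by
  induction p using Polynomial.induction_on' with
  | add p q hp hq =>
    obtain ⟨C, hC⟩ := hp
    obtain ⟨D, hD⟩ := hq
    refine ⟨C + D, fun x => ?_⟩
    calc |x| ^ k * |(p + q).eval x| * rexp (-(x ^ 2 / 2))
        ≤ |x| ^ k * (|p.eval x| + |q.eval x|) * rexp (-(x ^ 2 / 2)) := by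
          rw [eval_add]; gcongr; exact abs_add_le _ _
      _ ≤ C + D := by rw [mul_add, add_mul]; exact add_le_add (hC x) (hD x)
  | monomial n c =>
    refine ⟨|c| * ((k + n).factorial * rexp (1 / 2)), fun x => ?_⟩
    calc |x| ^ k * |(monomial n c).eval x| * rexp (-(x ^ 2 / 2))
        = |c| * (|x| ^ (k + n) * rexp (-(x ^ 2 / 2))) := by
          rw [eval_monomial, abs_mul, abs_pow, pow_add]; ring
      _ ≤ |c| * ((k + n).factorial * rexp (1 / 2)) :=
          mul_le_mul_of_nonneg_left (pow_abs_mul_exp_neg_sq_half_le _ x) (abs_nonneg c)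

def gaussianSchwartzMap : SchwartzMap ℝ ℂ where
  toFun := ofRealLI ∘ fun x => rexp (-(x ^ 2 / 2))
  smooth' := ofRealCLM.contDiff.comp (by fun_prop)
  decay' k n := by
    obtain ⟨C, hC⟩ := exists_bound_pow_abs_mul_abs_eval_mul_exp_neg_sq_half k
      ((hermite n).map (Int.castRingHom ℝ))
    refine ⟨C, fun x => ?_⟩
    rw [ofRealLI.norm_iteratedFDeriv_comp_left
        (by fun_prop : ContDiffAt ℝ ∞ (fun x : ℝ => rexp (-(x ^ 2 / 2))) x)
        (WithTop.coe_le_coe.2 le_top),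
      norm_iteratedFDeriv_eq_norm_iteratedDeriv, iteratedDeriv_eq_iterate,
      deriv_gaussian_eq_hermite_mul_gaussian]
    simpa [abs_mul, aeval_def, eval_map, mul_assoc] using hC x

lemma gaussianSchwartzMap_apply (x : ℝ) : gaussianSchwartzMap x = cexp (-(x ^ 2 / 2)) := by
  change ((rexp (-(x ^ 2 / 2)) : ℝ) : ℂ) = _
  push_cast
  rfl

lemma two_mul_ofReal_sub_I_ne_zero (t : ℝ) : 2 * (t : ℂ) - I ≠ 0 :=
  fun h => by simpa using congrArg im h

lemma sq_integral_uAlpha_mul_gaussianSchwartzMap (α : ℂ) {t : ℝ} (ht : 0 < t) :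
    (∫ x : ℝ, uAlpha α t x * gaussianSchwartzMap x) ^ 2 =
      α ^ 2 * cexp ((2 * ‖α‖ ^ 2 * Real.log t : ℝ) * I) * (4 * π / (2 * t - I)) := by
  have htC : (t : ℂ) ≠ 0 := ofReal_ne_zero.mpr ht.ne'
  set b : ℂ := 1 / 2 - I / (4 * t)
  have hb : 0 < b.re := by simp [b, Complex.div_re]
  have hpoint : ∀ x : ℝ, uAlpha α t x * gaussianSchwartzMap x =
      α * cexp (I * ((‖α‖ ^ 2 : ℝ) : ℂ) * Real.log t) / Real.sqrt t * cexp (-b * x ^ 2) := by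
    intro x
    rw [uAlpha, gaussianSchwartzMap_apply, mul_div_right_comm, mul_assoc, ← Complex.exp_add]
    congr 3
    simp only [b]
    field_simp
    ring
  have hsqrt : ((Real.sqrt t : ℝ) : ℂ) ^ 2 = t := by
    rw [← ofReal_pow, Real.sq_sqrt ht.le]
  have hb_div : (π : ℂ) / b / t = 4 * π / (2 * t - I) := by
    have hb0 : b ≠ 0 := fun h => by simp [h] at hb
    rw [div_div, div_eq_div_iff (mul_ne_zero hb0 htC) (two_mul_ofReal_sub_I_ne_zero t)]
    simp only [b]
    field_simp
    ring
  simp_rw [hpoint]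
  rw [MeasureTheory.integral_const_mul, integral_gaussian_complex hb, mul_pow, div_pow, mul_pow,
    one_div, cpow_ofNat_inv_pow, hsqrt, ← Complex.exp_nat_mul, ← hb_div]
  have hphase : ((2 : ℕ) : ℂ) * (I * ((‖α‖ ^ 2 : ℝ) : ℂ) * Real.log t) =
      ((2 * ‖α‖ ^ 2 * Real.log t : ℝ) : ℂ) * I := by
    push_cast; ring
  rw [hphase]
  ring

lemma Complex.not_tendsto_exp_mul_I_atBot (z : ℂ) :
    ¬ Tendsto (fun s : ℝ => cexp (s * I)) atBot (𝓝 z) := by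
  intro h
  have hneg : Tendsto (fun s : ℝ => -cexp (s * I)) atBot (𝓝 z) := by
    refine (h.comp (tendsto_atBot_add_const_right _ (-π) tendsto_id)).congr fun s => ?_
    simp [add_mul, Complex.exp_add]
  have hz : z = -z := tendsto_nhds_unique hneg h.neg
  have hnorm : ‖z‖ = 1 := by
    refine tendsto_nhds_unique h.norm ?_
    simp
  have : z = 0 := by linear_combination hz / 2
  simp [this] at hnorm

lemma not_tendsto_exp_mul_log_mul_I_nhdsGT_zero {c : ℝ} (hc : 0 < c) (z : ℂ) :
    ¬ Tendsto (fun t : ℝ => cexp ((c * Real.log t : ℝ) * I)) (𝓝[>] 0) (𝓝 z) := by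
  intro h
  have hexp : Tendsto (fun s : ℝ => rexp (s / c)) atBot (𝓝[>] 0) :=
    Real.tendsto_exp_atBot_nhdsGT.comp (tendsto_id.atBot_div_const hc)
  refine Complex.not_tendsto_exp_mul_I_atBot z ((h.comp hexp).congr fun s => ?_)
  simp only [Function.comp_apply, Real.log_exp, mul_div_cancel₀ s hc.ne']

/-- For `α ≠ 0` there is no tempered distribution `u₀ ∈ 𝒮'(ℝ)` such that
`∫ u_α(t,x) φ(x) dx → u₀(φ)` as `t → 0⁺` for every Schwartz function `φ`:
`u_α(t,·)` has no limit in `𝒮'(ℝ)` as `t → 0⁺`. -/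
theorem uAlpha_no_tempered_limit (α : ℂ) (hα : α ≠ 0) :
    ¬ ∃ u₀ : SchwartzMap ℝ ℂ →L[ℂ] ℂ, ∀ φ : SchwartzMap ℝ ℂ,
      Filter.Tendsto (fun t : ℝ => ∫ x : ℝ, uAlpha α t x * φ x)
        (nhdsWithin 0 (Set.Ioi 0)) (nhds (u₀ φ)) := by
  rintro ⟨u₀, hu⟩
  have hdenom :
      Tendsto (fun t : ℝ => 2 * (t : ℂ) - I) (𝓝[>] 0) (𝓝 (2 * ((0 : ℝ) : ℂ) - I)) :=
    ((continuous_ofReal.tendsto 0).const_mul 2 |>.sub_const I).mono_left nhdsWithin_le_nhds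
  have hlim := (((hu gaussianSchwartzMap).pow 2).mul hdenom).div_const (4 * π * α ^ 2)
  have hc : 0 < 2 * ‖α‖ ^ 2 := mul_pos two_pos (pow_pos (norm_pos_iff.2 hα) 2)
  refine not_tendsto_exp_mul_log_mul_I_nhdsGT_zero hc _ (hlim.congr' ?_)
  filter_upwards [self_mem_nhdsWithin] with t ht
  rw [sq_integral_uAlpha_mul_gaussianSchwartzMap α ht]
  field_simp [two_mul_ofReal_sub_I_ne_zero t]
end
end
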